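/- arXiv:1210.1290 — 2 statements merged into one kernel-verified Lean document; each statement's English description precedes it below -/
import Mathlib

section
/- If M = Δ₀ U† Π₀ U Δ₀ has eigenvalue 1/2 with unit eigenvector |φ₀⟩, then the vector Δ₀ U† (−Π₀ + (I − Π₀)) U |φ₀⟩ equals the zero vector; i.e., applying U, the phase flip −Π₀ + Π₁, then U† to |φ₀⟩ yields a state entirely in the range of I − Δ₀. -/
open Matrix

/-
Since `M = Δ₀ M` and the eigenvalue `1/2` is nonzero, the eigenvector lies in the range of `Δ₀`,
so `Δ₀ U† Π₀ U φ₀ = M φ₀ = φ₀ / 2`. Writing the phase flip as `I − 2 Π₀` and using `U† U = I`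
then gives `Δ₀ U† (I − 2 Π₀) U φ₀ = φ₀ − 2 · φ₀ / 2 = 0`.
-/

section

variable {ι K : Type*} [Fintype ι] [Field K]

theorem Matrix.mulVec_eq_self_of_idempotent_mul_mulVec_eq_smul {D A : Matrix ι ι K}
    (hD : IsIdempotentElem D) {v : ι → K} {c : K} (hc : c ≠ 0)
    (hv : (D * A) *ᵥ v = c • v) : D *ᵥ v = v := by
  have h : c • D *ᵥ v = c • v := by
    rw [← mulVec_smul, ← hv, mulVec_mulVec, ← mul_assoc, hD.eq]
  exact smul_right_injective _ hc h

theorem Matrix.reflection_mulVec_of_compression_mulVec_eq_smul [DecidableEq ι]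
    {D W U P : Matrix ι ι K}
    (hD : IsIdempotentElem D) (hWU : W * U = 1) {v : ι → K} {c : K} (hc : c ≠ 0)
    (hv : (D * W * P * U * D) *ᵥ v = c • v) :
    (D * W * (-P + (1 - P)) * U) *ᵥ v = (1 - 2 * c) • v := by
  have hDv : D *ᵥ v = v :=
    mulVec_eq_self_of_idempotent_mul_mulVec_eq_smul hD hc (A := W * P * U * D)
      (by simpa only [mul_assoc] using hv)
  have hPv : (D * W * P * U) *ᵥ v = c • v := by
    rw [← hv, ← mulVec_mulVec v (D * W * P * U) D, hDv]
  have hsplit : D * W * (-P + (1 - P)) * U = D * (W * U) - (2 : K) • (D * W * P * U) := by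
    noncomm_ring
    module
  rw [hsplit, hWU, mul_one, sub_mulVec, smul_mulVec, hPv, hDv, smul_smul, sub_smul, one_smul]

end

theorem stmt5_general {n : ℕ} (U D₀ P₀ M : Matrix (Fin n) (Fin n) ℂ)
    (hU : U ∈ Matrix.unitaryGroup (Fin n) ℂ)
    (hD : D₀ * D₀ = D₀)
    (hM : M = D₀ * Uᴴ * P₀ * U * D₀)
    (φ : EuclideanSpace ℂ (Fin n))
    (heig : M.mulVec φ = ((1 / 2 : ℝ) : ℂ) • (φ : Fin n → ℂ)) :
    (D₀ * Uᴴ * (-P₀ + (1 - P₀)) * U).mulVec φ = 0 := by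
  have hUU : Uᴴ * U = 1 := hU.1
  rw [reflection_mulVec_of_compression_mulVec_eq_smul hD hUU (by norm_num) (hM ▸ heig)]
  norm_num

/-- If `M = Δ₀ U† Π₀ U Δ₀` has eigenvalue `1/2` with unit
eigenvector `|φ₀⟩`, then `Δ₀ U† (−Π₀ + (I − Π₀)) U |φ₀⟩ = 0`, i.e. applying `U`,
the phase flip, then `U†` yields a state entirely in the range of `I − Δ₀`. -/
theorem stmt5 {n : ℕ} (U D₀ P₀ M : Matrix (Fin n) (Fin n) ℂ)
    (hU : U ∈ Matrix.unitaryGroup (Fin n) ℂ)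
    (hDH : D₀.IsHermitian) (hD : D₀ * D₀ = D₀)
    (hPH : P₀.IsHermitian) (hP : P₀ * P₀ = P₀)
    (hM : M = D₀ * Uᴴ * P₀ * U * D₀)
    (φ : EuclideanSpace ℂ (Fin n)) (hφ : ‖φ‖ = 1)
    (heig : M.mulVec φ = ((1 / 2 : ℝ) : ℂ) • (φ : Fin n → ℂ)) :
    (D₀ * Uᴴ * (-P₀ + (1 - P₀)) * U).mulVec φ = 0 :=
  stmt5_general U D₀ P₀ M hU hD hM φ heig
end

section
/- For any three density operators ρ, σ, ξ on a finite-dimensional Hilbert space, F(ρ, σ)² + F(σ, ξ)² ≤ 1 + F(ρ, ξ), where F denotes the fidelity. -/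
/-!
Write `A = √ρ`, `B = √σ`, `C = √ξ`. For the Hilbert–Schmidt inner product `⟪X, Y⟫ = tr (Xᴴ Y)`
these are unit vectors, and `F(ρ, σ) = tr |BA|` is the trace norm of `BA`. Polar decomposition
gives unitaries `W₁`, `W₂` with `tr (W₁ᴴ BA) = F(ρ, σ)` and `tr (W₂ᴴ CB) = F(σ, ξ)`, so the unit
vectors `u = A`, `v = BW₁`, `w = CW₂W₁` satisfy `⟪v, u⟫ = F(ρ, σ)`, `⟪w, v⟫ = F(σ, ξ)` and
`‖⟪w, u⟫‖ = ‖tr (U CA)‖ ≤ tr |CA| = F(ρ, ξ)` for a unitary `U`. The theorem thus reduces to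
`‖⟪v, u⟫‖² + ‖⟪w, v⟫‖² ≤ 1 + ‖⟪w, u⟫‖` for unit vectors in an inner product space.
-/

open Matrix
open scoped ComplexOrder InnerProductSpace

/-- The square root of a positive semidefinite matrix, as defined in the older Mathlib
(`Matrix.PosSemidef.sqrt`, removed since). -/
noncomputable def Matrix.PosSemidef.sqrt {n : ℕ} {A : Matrix (Fin n) (Fin n) ℂ}
    (hA : A.PosSemidef) : Matrix (Fin n) (Fin n) ℂ :=
  hA.1.eigenvectorUnitary.1 * diagonal ((↑) ∘ (√·) ∘ hA.1.eigenvalues) *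
    (star hA.1.eigenvectorUnitary : Matrix (Fin n) (Fin n) ℂ)

theorem Matrix.PosSemidef.posSemidef_sqrt {n : ℕ} {A : Matrix (Fin n) (Fin n) ℂ}
    (hA : A.PosSemidef) : hA.sqrt.PosSemidef := by
  have hd : (diagonal ((↑) ∘ (√·) ∘ hA.1.eigenvalues : Fin n → ℂ)).PosSemidef :=
    PosSemidef.diagonal fun i => Complex.zero_le_real.mpr (Real.sqrt_nonneg _)
  exact hd.mul_mul_conjTranspose_same _

/-- The fidelity `F(ρ, σ) = tr √(√ρ σ √ρ)` of two positive semidefinite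
matrices. -/
noncomputable def fidelity {n : ℕ} (ρ σ : Matrix (Fin n) (Fin n) ℂ)
    (hρ : ρ.PosSemidef) (hσ : σ.PosSemidef) : ℝ := by
  have h : (hρ.sqrt * σ * hρ.sqrt).PosSemidef := by
    have := hσ.mul_mul_conjTranspose_same hρ.sqrt
    rwa [hρ.posSemidef_sqrt.1] at this
  exact (h.sqrt.trace).re

theorem Matrix.PosSemidef.sqrt_mul_self {n : ℕ} {A : Matrix (Fin n) (Fin n) ℂ}
    (hA : A.PosSemidef) : hA.sqrt * hA.sqrt = A := by
  set U : Matrix (Fin n) (Fin n) ℂ := hA.1.eigenvectorUnitary.1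
  set D : Matrix (Fin n) (Fin n) ℂ := diagonal ((↑) ∘ (√·) ∘ hA.1.eigenvalues)
  have hU : star U * U = 1 := Unitary.star_mul_self_of_mem hA.1.eigenvectorUnitary.prop
  have hD : D * D = diagonal (RCLike.ofReal ∘ hA.1.eigenvalues) := by
    rw [diagonal_mul_diagonal]
    congr 1
    funext i
    simp [← Complex.ofReal_mul, Real.mul_self_sqrt (hA.eigenvalues_nonneg i)]
  calc hA.sqrt * hA.sqrt = U * (D * (star U * U) * D) * star U := by
        simp only [sqrt, U, D, Matrix.mul_assoc]
    _ = A := by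
      conv_rhs => rw [hA.1.spectral_theorem, Unitary.conjStarAlgAut_apply]
      rw [hU, Matrix.mul_one, hD]

section GramInequality

variable {𝕜 E : Type*} [RCLike 𝕜] [SeminormedAddCommGroup E] [InnerProductSpace 𝕜 E]

/- With `α = ⟪u, v⟫` and `β = ⟪w, v⟫`, the vector `z = α • u + β • w` satisfies
`⟪z, v⟫ = ‖α‖² + ‖β‖² =: S` and `‖z‖² ≤ S (1 + ‖⟪w, u⟫‖)`, so Cauchy–Schwarz against `v`
gives `S² ≤ S (1 + ‖⟪w, u⟫‖)`. -/
theorem norm_inner_sq_add_norm_inner_sq_le {u v w : E} (hu : ‖u‖ = 1) (hv : ‖v‖ = 1)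
    (hw : ‖w‖ = 1) : ‖⟪v, u⟫_𝕜‖ ^ 2 + ‖⟪w, v⟫_𝕜‖ ^ 2 ≤ 1 + ‖⟪w, u⟫_𝕜‖ := by
  rw [norm_inner_symm v u]
  set α := ⟪u, v⟫_𝕜
  set β := ⟪w, v⟫_𝕜
  set S := ‖α‖ ^ 2 + ‖β‖ ^ 2
  set z := α • u + β • w
  have hzv : ⟪z, v⟫_𝕜 = (S : 𝕜) := by
    simp only [z, S, inner_add_left, inner_smul_left]
    push_cast
    rw [← RCLike.conj_mul, ← RCLike.conj_mul]
  have hS_le : S ≤ ‖z‖ :=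
    calc S = ‖⟪z, v⟫_𝕜‖ := by rw [hzv, RCLike.norm_of_nonneg (by positivity)]
      _ ≤ ‖z‖ * ‖v‖ := norm_inner_le_norm _ _
      _ = ‖z‖ := by rw [hv, mul_one]
  have hcross : RCLike.re ⟪α • u, β • w⟫_𝕜 ≤ ‖α‖ * ‖β‖ * ‖⟪w, u⟫_𝕜‖ :=
    calc RCLike.re ⟪α • u, β • w⟫_𝕜 ≤ ‖⟪α • u, β • w⟫_𝕜‖ := RCLike.re_le_norm _
      _ = ‖α‖ * ‖β‖ * ‖⟪w, u⟫_𝕜‖ := by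
        rw [inner_smul_left, inner_smul_right, norm_mul, norm_mul, RCLike.norm_conj,
          norm_inner_symm u w, mul_assoc]
  have hz_sq : ‖z‖ ^ 2 ≤ S * (1 + ‖⟪w, u⟫_𝕜‖) := by
    rw [norm_add_sq (𝕜 := 𝕜), norm_smul, norm_smul, hu, hw]
    nlinarith [sq_nonneg (‖α‖ - ‖β‖), norm_nonneg ⟪w, u⟫_𝕜]
  nlinarith [norm_nonneg ⟪w, u⟫_𝕜]

end GramInequality

theorem LinearMap.exists_linearIsometry_apply_eq {𝕜 E : Type*} [RCLike 𝕜]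
    [NormedAddCommGroup E] [InnerProductSpace 𝕜 E] [FiniteDimensional 𝕜 E]
    (f h : E →ₗ[𝕜] E) (hfh : ∀ x, ‖f x‖ = ‖h x‖) :
    ∃ W : E →ₗᵢ[𝕜] E, ∀ x, W (h x) = f x := by
  have hker : LinearMap.ker h ≤ LinearMap.ker f := fun x hx ↦ by
    rw [LinearMap.mem_ker, ← norm_eq_zero, hfh, norm_eq_zero]
    exact hx
  let g := (LinearMap.ker h).liftQ f hker ∘ₗ h.quotKerEquivRange.symm.toLinearMap
  have hg : ∀ x, g ⟨h x, LinearMap.mem_range_self h x⟩ = f x := fun x ↦ by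
    simp [g, LinearMap.quotKerEquivRange_symm_apply_image]
  have hg_norm : ∀ s, ‖g s‖ = ‖s‖ := by
    rintro ⟨-, x, rfl⟩
    rw [hg, hfh]
    rfl
  exact ⟨LinearIsometry.extend ⟨g, hg_norm⟩, fun x ↦
    (LinearIsometry.extend_apply _ ⟨h x, LinearMap.mem_range_self h x⟩).trans (hg x)⟩

namespace Matrix

section

variable {𝕜 m k : Type*} [RCLike 𝕜] [Fintype m] [Fintype k]

noncomputable def toHilbertSchmidt (A : Matrix m k 𝕜) : EuclideanSpace 𝕜 (m × k) :=
  WithLp.toLp 2 (Function.uncurry A)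

theorem inner_toHilbertSchmidt (A B : Matrix m k 𝕜) :
    ⟪A.toHilbertSchmidt, B.toHilbertSchmidt⟫_𝕜 = (Aᴴ * B).trace := by
  simp only [toHilbertSchmidt, PiLp.inner_apply, RCLike.inner_apply, Fintype.sum_prod_type,
    trace, diag, mul_apply, conjTranspose_apply, RCLike.star_def]
  rw [Finset.sum_comm]
  exact Finset.sum_congr rfl fun _ _ ↦ Finset.sum_congr rfl fun _ _ ↦ mul_comm _ _

theorem norm_toHilbertSchmidt_sq (A : Matrix m k 𝕜) :
    ‖A.toHilbertSchmidt‖ ^ 2 = RCLike.re (Aᴴ * A).trace := by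
  rw [← inner_toHilbertSchmidt, inner_self_eq_norm_sq]

variable [DecidableEq k]

theorem inner_toHilbertSchmidt_mul_unitary {U : Matrix k k 𝕜} (hU : U ∈ unitaryGroup k 𝕜)
    (A B : Matrix m k 𝕜) :
    ⟪(A * U).toHilbertSchmidt, (B * U).toHilbertSchmidt⟫_𝕜 =
      ⟪A.toHilbertSchmidt, B.toHilbertSchmidt⟫_𝕜 := by
  rw [inner_toHilbertSchmidt, inner_toHilbertSchmidt, conjTranspose_mul, Matrix.mul_assoc,
    trace_mul_comm, Matrix.mul_assoc, Matrix.mul_assoc, ← star_eq_conjTranspose,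
    mem_unitaryGroup_iff.mp hU, Matrix.mul_one]

theorem norm_toHilbertSchmidt_mul_unitary {U : Matrix k k 𝕜} (hU : U ∈ unitaryGroup k 𝕜)
    (A : Matrix m k 𝕜) : ‖(A * U).toHilbertSchmidt‖ = ‖A.toHilbertSchmidt‖ := by
  rw [@norm_eq_sqrt_re_inner 𝕜, @norm_eq_sqrt_re_inner 𝕜, inner_toHilbertSchmidt_mul_unitary hU]

theorem norm_toEuclideanCLM_apply_sq (A : Matrix k k 𝕜) (x : EuclideanSpace 𝕜 k) :
    ‖toEuclideanCLM (𝕜 := 𝕜) A x‖ ^ 2 = RCLike.re ⟪x, toEuclideanCLM (𝕜 := 𝕜) (Aᴴ * A) x⟫_𝕜 := by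
  rw [map_mul, ← star_eq_conjTranspose, map_star, ContinuousLinearMap.star_eq_adjoint,
    mul_apply_eq_comp, ContinuousLinearMap.adjoint_inner_right, inner_self_eq_norm_sq]

end

variable {n : ℕ}

noncomputable def modulus (M : Matrix (Fin n) (Fin n) ℂ) : Matrix (Fin n) (Fin n) ℂ :=
  (posSemidef_conjTranspose_mul_self M).sqrt

theorem posSemidef_modulus (M : Matrix (Fin n) (Fin n) ℂ) : M.modulus.PosSemidef :=
  (posSemidef_conjTranspose_mul_self M).posSemidef_sqrt

theorem norm_toEuclideanCLM_modulus_apply (M : Matrix (Fin n) (Fin n) ℂ)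
    (x : EuclideanSpace ℂ (Fin n)) :
    ‖toEuclideanCLM (𝕜 := ℂ) M.modulus x‖ = ‖toEuclideanCLM (𝕜 := ℂ) M x‖ := by
  rw [← sq_eq_sq₀ (norm_nonneg _) (norm_nonneg _), norm_toEuclideanCLM_apply_sq,
    norm_toEuclideanCLM_apply_sq, M.posSemidef_modulus.1.eq, modulus,
    PosSemidef.sqrt_mul_self]

theorem exists_mem_unitaryGroup_eq_mul_modulus (M : Matrix (Fin n) (Fin n) ℂ) :
    ∃ W ∈ unitaryGroup (Fin n) ℂ, M = W * M.modulus := by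
  obtain ⟨V, hV⟩ := LinearMap.exists_linearIsometry_apply_eq
    (toEuclideanCLM (𝕜 := ℂ) M : EuclideanSpace ℂ (Fin n) →ₗ[ℂ] EuclideanSpace ℂ (Fin n))
    (toEuclideanCLM (𝕜 := ℂ) M.modulus) fun x ↦ (norm_toEuclideanCLM_modulus_apply M x).symm
  let u := Unitary.linearIsometryEquiv.symm (V.toLinearIsometryEquiv rfl)
  refine ⟨_, Unitary.map_mem (toEuclideanCLM (n := Fin n) (𝕜 := ℂ)).symm u.2,
    EquivLike.injective (toEuclideanCLM (n := Fin n) (𝕜 := ℂ)) ?_⟩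
  rw [map_mul, StarAlgEquiv.apply_symm_apply]
  ext1 x
  exact (hV x).symm

theorem norm_trace_mul_le_re_trace {U H : Matrix (Fin n) (Fin n) ℂ}
    (hU : U ∈ unitaryGroup (Fin n) ℂ) (hH : H.PosSemidef) : ‖(U * H).trace‖ ≤ H.trace.re := by
  have hR : hH.sqrtᴴ = hH.sqrt := hH.posSemidef_sqrt.1
  -- with `R = √H`, Cauchy–Schwarz for `tr (U H) = ⟪R, R U⟫`
  calc ‖(U * H).trace‖ = ‖⟪hH.sqrt.toHilbertSchmidt, (hH.sqrt * U).toHilbertSchmidt⟫_ℂ‖ := by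
        rw [inner_toHilbertSchmidt, hR, ← Matrix.mul_assoc, hH.sqrt_mul_self, trace_mul_comm]
    _ ≤ ‖hH.sqrt.toHilbertSchmidt‖ * ‖(hH.sqrt * U).toHilbertSchmidt‖ := norm_inner_le_norm _ _
    _ = ‖hH.sqrt.toHilbertSchmidt‖ ^ 2 := by rw [norm_toHilbertSchmidt_mul_unitary hU, sq]
    _ = H.trace.re := by rw [norm_toHilbertSchmidt_sq, hR, hH.sqrt_mul_self]; rfl

noncomputable def traceNorm (M : Matrix (Fin n) (Fin n) ℂ) : ℝ :=
  M.modulus.trace.re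

theorem traceNorm_nonneg (M : Matrix (Fin n) (Fin n) ℂ) : 0 ≤ M.traceNorm :=
  (Complex.nonneg_iff.mp M.posSemidef_modulus.trace_nonneg).1

theorem norm_trace_mul_le_traceNorm {U : Matrix (Fin n) (Fin n) ℂ}
    (hU : U ∈ unitaryGroup (Fin n) ℂ) (M : Matrix (Fin n) (Fin n) ℂ) :
    ‖(U * M).trace‖ ≤ M.traceNorm := by
  obtain ⟨W, hW, hM⟩ := exists_mem_unitaryGroup_eq_mul_modulus M
  conv_lhs => rw [hM, ← Matrix.mul_assoc]
  exact norm_trace_mul_le_re_trace (mul_mem hU hW) M.posSemidef_modulus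

theorem exists_mem_unitaryGroup_trace_star_mul_eq_traceNorm (M : Matrix (Fin n) (Fin n) ℂ) :
    ∃ W ∈ unitaryGroup (Fin n) ℂ, (star W * M).trace = M.traceNorm := by
  obtain ⟨W, hW, hM⟩ := exists_mem_unitaryGroup_eq_mul_modulus M
  refine ⟨W, hW, ?_⟩
  conv_lhs => rw [hM, ← Matrix.mul_assoc, mem_unitaryGroup_iff'.mp hW, Matrix.one_mul]
  exact Complex.eq_re_of_ofReal_le (r := 0) (by simpa using M.posSemidef_modulus.trace_nonneg)

theorem norm_toHilbertSchmidt_sqrt {ρ : Matrix (Fin n) (Fin n) ℂ} (hρ : ρ.PosSemidef)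
    (hρ1 : ρ.trace = 1) : ‖hρ.sqrt.toHilbertSchmidt‖ = 1 := by
  rw [← pow_eq_one_iff_of_nonneg (norm_nonneg _) two_ne_zero, norm_toHilbertSchmidt_sq,
    hρ.posSemidef_sqrt.1, hρ.sqrt_mul_self, hρ1, RCLike.one_re]

end Matrix

theorem fidelity_eq_traceNorm {n : ℕ} {ρ σ : Matrix (Fin n) (Fin n) ℂ} (hρ : ρ.PosSemidef)
    (hσ : σ.PosSemidef) : fidelity ρ σ hρ hσ = (hσ.sqrt * hρ.sqrt).traceNorm := by
  have h : hρ.sqrt * σ * hρ.sqrt = (hσ.sqrt * hρ.sqrt)ᴴ * (hσ.sqrt * hρ.sqrt) := by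
    conv_lhs => rw [← hσ.sqrt_mul_self]
    rw [conjTranspose_mul, hρ.posSemidef_sqrt.1, hσ.posSemidef_sqrt.1]
    simp only [Matrix.mul_assoc]
  suffices ∀ hA : (hρ.sqrt * σ * hρ.sqrt).PosSemidef,
      hA.sqrt.trace.re = (hσ.sqrt * hρ.sqrt).traceNorm from this _
  rw [h]
  exact fun _ ↦ rfl

/-- For any three density operators `ρ, σ, ξ` on a
finite-dimensional Hilbert space, `F(ρ, σ)² + F(σ, ξ)² ≤ 1 + F(ρ, ξ)`. -/
theorem stmt6 {n : ℕ} (ρ σ ξ : Matrix (Fin n) (Fin n) ℂ)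
    (hρ : ρ.PosSemidef) (hσ : σ.PosSemidef) (hξ : ξ.PosSemidef)
    (hρ1 : ρ.trace = 1) (hσ1 : σ.trace = 1) (hξ1 : ξ.trace = 1) :
    fidelity ρ σ hρ hσ ^ 2 + fidelity σ ξ hσ hξ ^ 2 ≤ 1 + fidelity ρ ξ hρ hξ := by
  obtain ⟨W₁, hW₁, h₁⟩ := exists_mem_unitaryGroup_trace_star_mul_eq_traceNorm (hσ.sqrt * hρ.sqrt)
  obtain ⟨W₂, hW₂, h₂⟩ := exists_mem_unitaryGroup_trace_star_mul_eq_traceNorm (hξ.sqrt * hσ.sqrt)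
  set u := hρ.sqrt.toHilbertSchmidt
  set v := (hσ.sqrt * W₁).toHilbertSchmidt
  set w := (hξ.sqrt * W₂ * W₁).toHilbertSchmidt
  have hvu : ⟪v, u⟫_ℂ = (hσ.sqrt * hρ.sqrt).traceNorm := by
    rw [inner_toHilbertSchmidt, conjTranspose_mul, hσ.posSemidef_sqrt.1, Matrix.mul_assoc,
      ← star_eq_conjTranspose, h₁]
  have hwv : ⟪w, v⟫_ℂ = (hξ.sqrt * hσ.sqrt).traceNorm := by
    rw [inner_toHilbertSchmidt_mul_unitary hW₁, inner_toHilbertSchmidt, conjTranspose_mul,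
      hξ.posSemidef_sqrt.1, Matrix.mul_assoc, ← star_eq_conjTranspose, h₂]
  have hwu : ‖⟪w, u⟫_ℂ‖ ≤ (hξ.sqrt * hρ.sqrt).traceNorm := by
    rw [inner_toHilbertSchmidt, Matrix.mul_assoc, conjTranspose_mul, hξ.posSemidef_sqrt.1,
      Matrix.mul_assoc, ← star_eq_conjTranspose]
    exact norm_trace_mul_le_traceNorm (Unitary.star_mem (mul_mem hW₂ hW₁)) _
  have hgram := norm_inner_sq_add_norm_inner_sq_le (𝕜 := ℂ) (u := u) (v := v) (w := w)
    (norm_toHilbertSchmidt_sqrt hρ hρ1)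
    ((norm_toHilbertSchmidt_mul_unitary hW₁ _).trans (norm_toHilbertSchmidt_sqrt hσ hσ1))
    ((norm_toHilbertSchmidt_mul_unitary hW₁ _).trans <|
      (norm_toHilbertSchmidt_mul_unitary hW₂ _).trans (norm_toHilbertSchmidt_sqrt hξ hξ1))
  rw [hvu, hwv, Complex.norm_of_nonneg (traceNorm_nonneg _),
    Complex.norm_of_nonneg (traceNorm_nonneg _)] at hgram
  rw [fidelity_eq_traceNorm, fidelity_eq_traceNorm, fidelity_eq_traceNorm]
  linarith
end
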